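/- The transformation T^∀ removing one level of outermost quantifiers satisfies: for every QBF φ, the formula ∀N(φ) ∃P(φ) T^∀(φ) is logically equivalent to φ, where N(φ) is the set of fresh negative-copy variables and P(φ) the set of fresh positive-copy variables plus abbreviation variables introduced by the transformation. -/

import Mathlib

/-- Syntax of full quantified boolean formulas. -/
inductive Fml : Type where
  | var : ℕ → Fml
  | tru : Fml
  | fls : Fml
  | neg : Fml → Fml
  | conj : Fml → Fml → Fml
  | disj : Fml → Fml → Fml
  | imp : Fml → Fml → Fml
  | biff : Fml → Fml → Fml
  | qex : Finset ℕ → Fml → Fml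
  | qall : Finset ℕ → Fml → Fml
  deriving DecidableEq

namespace Fml

/-- Satisfaction of a formula by a valuation. -/
def Sat : (ℕ → Bool) → Fml → Prop
  | V, var p => V p = true
  | _, tru => True
  | _, fls => False
  | V, neg φ => ¬ Sat V φ
  | V, conj φ ψ => Sat V φ ∧ Sat V ψ
  | V, disj φ ψ => Sat V φ ∨ Sat V ψ
  | V, imp φ ψ => Sat V φ → Sat V ψ
  | V, biff φ ψ => (Sat V φ ↔ Sat V ψ)
  | V, qex X φ => ∃ W : ℕ → Bool, (∀ q ∉ X, W q = V q) ∧ Sat W φ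
  | V, qall X φ => ∀ W : ℕ → Bool, (∀ q ∉ X, W q = V q) → Sat W φ

/-- Logical equivalence: same truth value under every valuation. -/
def Equiv (φ ψ : Fml) : Prop := ∀ V : ℕ → Bool, Sat V φ ↔ Sat V ψ

/-- All variables occurring (free or bound, including quantifier blocks). -/
def vars : Fml → Finset ℕ
  | var p => {p}
  | tru => ∅
  | fls => ∅
  | neg φ => vars φ
  | conj φ ψ => vars φ ∪ vars ψ
  | disj φ ψ => vars φ ∪ vars ψ
  | imp φ ψ => vars φ ∪ vars ψ
  | biff φ ψ => vars φ ∪ vars ψ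
  | qex X φ => X ∪ vars φ
  | qall X φ => X ∪ vars φ

/-- Free variables. -/
def freeVars : Fml → Finset ℕ
  | var p => {p}
  | tru => ∅
  | fls => ∅
  | neg φ => freeVars φ
  | conj φ ψ => freeVars φ ∪ freeVars ψ
  | disj φ ψ => freeVars φ ∪ freeVars ψ
  | imp φ ψ => freeVars φ ∪ freeVars ψ
  | biff φ ψ => freeVars φ ∪ freeVars ψ
  | qex X φ => freeVars φ \ X
  | qall X φ => freeVars φ \ X

/-- Bound variables. -/
def boundVars : Fml → Finset ℕ
  | var _ => ∅
  | tru => ∅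
  | fls => ∅
  | neg φ => boundVars φ
  | conj φ ψ => boundVars φ ∪ boundVars ψ
  | disj φ ψ => boundVars φ ∪ boundVars ψ
  | imp φ ψ => boundVars φ ∪ boundVars ψ
  | biff φ ψ => boundVars φ ∪ boundVars ψ
  | qex X φ => X ∪ boundVars φ
  | qall X φ => X ∪ boundVars φ

/-- Substitution of `ρ` for free occurrences of the variable `p`. -/
def subst (p : ℕ) (ρ : Fml) : Fml → Fml
  | var q => if q = p then ρ else var q
  | tru => tru
  | fls => fls
  | neg φ => neg (subst p ρ φ)
  | conj φ ψ => conj (subst p ρ φ) (subst p ρ ψ)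
  | disj φ ψ => disj (subst p ρ φ) (subst p ρ ψ)
  | imp φ ψ => imp (subst p ρ φ) (subst p ρ ψ)
  | biff φ ψ => biff (subst p ρ φ) (subst p ρ ψ)
  | qex X φ => qex X (if p ∈ X then φ else subst p ρ φ)
  | qall X φ => qall X (if p ∈ X then φ else subst p ρ φ)

/-- Simultaneous substitution given by an association list. -/
def simSubst (σ : List (ℕ × Fml)) : Fml → Fml
  | var q => ((σ.find? (fun e => e.1 == q)).map Prod.snd).getD (var q)
  | tru => tru
  | fls => fls
  | neg φ => neg (simSubst σ φ)
  | conj φ ψ => conj (simSubst σ φ) (simSubst σ ψ)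
  | disj φ ψ => disj (simSubst σ φ) (simSubst σ ψ)
  | imp φ ψ => imp (simSubst σ φ) (simSubst σ ψ)
  | biff φ ψ => biff (simSubst σ φ) (simSubst σ ψ)
  | qex X φ => qex X (simSubst (σ.filter (fun e => decide (e.1 ∉ X))) φ)
  | qall X φ => qall X (simSubst (σ.filter (fun e => decide (e.1 ∉ X))) φ)

/-- Conjunction of a list of formulas (`⊤` for the empty list). -/
def bigAnd : List Fml → Fml
  | [] => tru
  | [φ] => φ
  | φ :: rest => conj φ (bigAnd rest)

/-- Length of a formula: variables and operators count 1, except that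
negation does not count; a block `QX` contributes `1 + |X|`. -/
def len : Fml → ℕ
  | var _ => 1
  | tru => 1
  | fls => 1
  | neg φ => len φ
  | conj φ ψ => 1 + len φ + len ψ
  | disj φ ψ => 1 + len φ + len ψ
  | imp φ ψ => 1 + len φ + len ψ
  | biff φ ψ => 1 + len φ + len ψ
  | qex X φ => 1 + X.card + len φ
  | qall X φ => 1 + X.card + len φ

/-- Quantifier depth. -/
def md : Fml → ℕ
  | var _ => 0
  | tru => 0
  | fls => 0
  | neg φ => md φ
  | conj φ ψ => max (md φ) (md ψ)
  | disj φ ψ => max (md φ) (md ψ)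
  | imp φ ψ => max (md φ) (md ψ)
  | biff φ ψ => max (md φ) (md ψ)
  | qex _ φ => 1 + md φ
  | qall _ φ => 1 + md φ

/-- Number of quantifier blocks. -/
def nb : Fml → ℕ
  | var _ => 0
  | tru => 0
  | fls => 0
  | neg φ => nb φ
  | conj φ ψ => nb φ + nb ψ
  | disj φ ψ => nb φ + nb ψ
  | imp φ ψ => nb φ + nb ψ
  | biff φ ψ => nb φ + nb ψ
  | qex _ φ => 1 + nb φ
  | qall _ φ => 1 + nb φ

/-- Total number of quantified variables (sum of block sizes). -/
def nv : Fml → ℕ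
  | var _ => 0
  | tru => 0
  | fls => 0
  | neg φ => nv φ
  | conj φ ψ => nv φ + nv ψ
  | disj φ ψ => nv φ + nv ψ
  | imp φ ψ => nv φ + nv ψ
  | biff φ ψ => nv φ + nv ψ
  | qex X φ => X.card + nv φ
  | qall X φ => X.card + nv φ

/-- Boolean (quantifier-free) formulas. -/
def isBool : Fml → Bool
  | var _ => true
  | tru => true
  | fls => true
  | neg φ => isBool φ
  | conj φ ψ => isBool φ && isBool ψ
  | disj φ ψ => isBool φ && isBool ψ
  | imp φ ψ => isBool φ && isBool ψ
  | biff φ ψ => isBool φ && isBool ψ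
  | qex _ _ => false
  | qall _ _ => false

/-- Prenex form: a prefix of quantifier blocks followed by a boolean formula. -/
def IsPrenex : Fml → Prop
  | qex _ φ => IsPrenex φ
  | qall _ φ => IsPrenex φ
  | φ => isBool φ = true

end Fml

/-- Quantifiers. -/
inductive Quant : Type where
  | qex : Quant
  | qall : Quant
  deriving DecidableEq

/-- The dual of a quantifier. -/
def Quant.dual : Quant → Quant
  | .qex => .qall
  | .qall => .qex

/-- Applying a quantifier block to a formula. -/
def qApply : Quant → Finset ℕ → Fml → Fml
  | .qex, X, φ => Fml.qex X φ
  | .qall, X, φ => Fml.qall X φ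
open Fml in
/-- An entry `(p, Q, X, ψ)` abbreviates the quantified formula `QX ψ`. -/
def entryFml (e : ℕ × Quant × Finset ℕ × Fml) : Fml := qApply e.2.1 e.2.2.1 e.2.2.2

open Fml in
/-- A decomposition of `φ` into a boolean skeleton `β` and its outermost
quantified subformulas `QᵢXᵢφᵢ` abbreviated by fresh variables `pᵢ`,
together with a choice of fresh positive and negative copies `x⁺ᵢ`, `x⁻ᵢ`
of the quantified variables (Fact 4 of the paper). -/
structure OneLevelData (φ : Fml) where
  β : Fml
  L : List (ℕ × Quant × Finset ℕ × Fml)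
  posC : ℕ → ℕ → ℕ
  negC : ℕ → ℕ → ℕ
  hbool : β.isBool = true
  hdec : φ = simSubst (L.map (fun e => (e.1, entryFml e))) β
  hnodup : (L.map (fun e => e.1)).Nodup
  hpnotin : ∀ e ∈ L, e.1 ∉ vars φ
  hpnotfree : ∀ e ∈ L, ∀ e' ∈ L, e.1 ∉ freeVars e'.2.2.2
  hlen : len φ = len β + (L.map (fun e => e.2.2.1.card)).sum
      + (L.map (fun e => len e.2.2.2)).sum
  hmd : md φ = (L.map (fun e => 1 + md e.2.2.2)).foldr max 0
  hcfresh : ∀ i : ℕ, ∀ e ∈ L[i]?, ∀ x ∈ e.2.2.1,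
      posC i x ∉ vars φ ∧ negC i x ∉ vars φ ∧
      posC i x ∉ L.map (fun e => e.1) ∧ negC i x ∉ L.map (fun e => e.1)
  hcdist : ∀ i i' : ℕ, ∀ e ∈ L[i]?, ∀ e' ∈ L[i']?,
      ∀ x ∈ e.2.2.1, ∀ x' ∈ e'.2.2.1, ∀ b b' : Bool,
      (if b then posC i x else negC i x) = (if b' then posC i' x' else negC i' x') →
      (i, x, b) = (i', x', b')

namespace OneLevelData

open Fml

variable {φ : Fml}

/-- `φᵢ[σᵢ]`: the body of the `i`-th entry with its quantified variables
renamed to their positive copies. -/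
noncomputable def renameEntry (D : OneLevelData φ) (i : ℕ) (e : ℕ × Quant × Finset ℕ × Fml) : Fml :=
  simSubst (e.2.2.1.toList.map (fun x => (x, var (D.posC i x)))) e.2.2.2

/-- The linking constraint of the `i`-th entry:
`¬pᵢ → ⋀_{x∈Xᵢ}(x⁺ᵢ ↔ x⁻ᵢ)` if `Qᵢ = ∃` and
`pᵢ → ⋀_{x∈Xᵢ}(x⁺ᵢ ↔ x⁻ᵢ)` if `Qᵢ = ∀`. -/
noncomputable def linkEntry (D : OneLevelData φ) (i : ℕ) (e : ℕ × Quant × Finset ℕ × Fml) : Fml :=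
  match e.2.1 with
  | .qex => imp (neg (var e.1))
      (bigAnd (e.2.2.1.toList.map (fun x => biff (var (D.posC i x)) (var (D.negC i x)))))
  | .qall => imp (var e.1)
      (bigAnd (e.2.2.1.toList.map (fun x => biff (var (D.posC i x)) (var (D.negC i x)))))

/-- The defining and linking constraints
`⋀ᵢ (pᵢ ↔ φᵢ[σᵢ]) ∧ (linking constraints)`. -/
noncomputable def constraints (D : OneLevelData φ) : Fml :=
  conj (bigAnd ((D.L.zipIdx.map Prod.swap).map (fun ie => biff (var ie.2.1) (D.renameEntry ie.1 ie.2))))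
       (bigAnd ((D.L.zipIdx.map Prod.swap).map (fun ie => D.linkEntry ie.1 ie.2)))

/-- The one-level transformation `T^∀(φ)`. -/
noncomputable def Tall (D : OneLevelData φ) : Fml := conj D.constraints D.β

/-- The one-level transformation `T^∃(φ)`. -/
noncomputable def Tex (D : OneLevelData φ) : Fml := imp D.constraints D.β

/-- `T^Q(φ)`. -/
noncomputable def TQ (Q : Quant) (D : OneLevelData φ) : Fml :=
  match Q with
  | .qall => D.Tall
  | .qex => D.Tex

/-- `N(φ)`: the set of fresh negative copies. -/
def Nset (D : OneLevelData φ) : Finset ℕ :=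
  ((D.L.zipIdx.map Prod.swap).map (fun ie => ie.2.2.2.1.image (D.negC ie.1))).foldr (· ∪ ·) ∅

/-- `P(φ)`: the set of fresh positive copies together with the abbreviation
variables `pᵢ`. -/
def Pset (D : OneLevelData φ) : Finset ℕ :=
  ((D.L.zipIdx.map Prod.swap).map (fun ie => ie.2.2.2.1.image (D.posC ie.1) ∪ {ie.2.1})).foldr (· ∪ ·) ∅

end OneLevelData

open Fml OneLevelData in
/-- The full prenexing transformation `tr^Q`, with explicit fuel (the fuel
`md φ` always suffices since `md (T^Q(φ)) = md φ − 1` for non-boolean `φ`);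
`D` is a choice of one-level decomposition for every formula. -/
noncomputable def tr (D : ∀ ψ : Fml, OneLevelData ψ) : ℕ → Quant → Fml → Fml
  | 0, _, φ => φ
  | n + 1, Q, φ =>
    if φ.isBool then φ
    else
      let ψ := TQ Q (D φ)
      qApply Q.dual (Pset (D φ) ∪ Nset (D ψ)) (tr D n Q.dual ψ)

open Fml OneLevelData in
/-- The full prenexing transformation `tr^Q(φ)`. -/
noncomputable def trQ (D : ∀ ψ : Fml, OneLevelData ψ) (Q : Quant) (φ : Fml) : Fml :=
  tr D (md φ) Q φ


/-! ### Auxiliary lemmas -/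

attribute [local instance] Classical.propDecidable

namespace Fml

theorem freeVars_subset_vars : ∀ φ : Fml, freeVars φ ⊆ vars φ := by
  intro φ
  induction φ with
  | var p => simp [freeVars, vars]
  | tru => simp [freeVars, vars]
  | fls => simp [freeVars, vars]
  | neg φ ih => simpa [freeVars, vars] using ih
  | conj φ ψ ih1 ih2 => exact Finset.union_subset_union ih1 ih2
  | disj φ ψ ih1 ih2 => exact Finset.union_subset_union ih1 ih2
  | imp φ ψ ih1 ih2 => exact Finset.union_subset_union ih1 ih2
  | biff φ ψ ih1 ih2 => exact Finset.union_subset_union ih1 ih2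
  | qex X φ ih =>
      exact (Finset.sdiff_subset).trans (ih.trans (Finset.subset_union_right))
  | qall X φ ih =>
      exact (Finset.sdiff_subset).trans (ih.trans (Finset.subset_union_right))

theorem sat_congr : ∀ (φ : Fml) (V V' : ℕ → Bool),
    (∀ x ∈ freeVars φ, V x = V' x) → (Sat V φ ↔ Sat V' φ) := by
  intro φ
  induction φ with
  | var p => intro V V' h; simp only [Sat]; rw [h p (by simp [freeVars])]
  | tru => intro V V' h; simp [Sat]
  | fls => intro V V' h; simp [Sat]
  | neg φ ih => intro V V' h; simp only [Sat]; rw [ih V V' h]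
  | conj φ ψ ih1 ih2 =>
      intro V V' h
      simp only [Sat]
      rw [ih1 V V' (fun x hx => h x (by simp [freeVars, hx])),
        ih2 V V' (fun x hx => h x (by simp [freeVars, hx]))]
  | disj φ ψ ih1 ih2 =>
      intro V V' h
      simp only [Sat]
      rw [ih1 V V' (fun x hx => h x (by simp [freeVars, hx])),
        ih2 V V' (fun x hx => h x (by simp [freeVars, hx]))]
  | imp φ ψ ih1 ih2 =>
      intro V V' h
      simp only [Sat]
      rw [ih1 V V' (fun x hx => h x (by simp [freeVars, hx])),
        ih2 V V' (fun x hx => h x (by simp [freeVars, hx]))]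
  | biff φ ψ ih1 ih2 =>
      intro V V' h
      simp only [Sat]
      rw [ih1 V V' (fun x hx => h x (by simp [freeVars, hx])),
        ih2 V V' (fun x hx => h x (by simp [freeVars, hx]))]
  | qex X φ ih =>
      intro V V' h
      simp only [Sat]
      constructor
      · rintro ⟨W, hW, hs⟩
        refine ⟨fun q => if q ∈ X then W q else V' q, fun q hq => by simp [hq], ?_⟩
        rw [← ih W _ ?_]
        · exact hs
        · intro x hx
          by_cases hxX : x ∈ X
          · simp [hxX]
          · simp only [hxX, if_neg, ite_false]
            rw [hW x hxX]
            exact h x (by simp [freeVars, hx, hxX])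
      · rintro ⟨W, hW, hs⟩
        refine ⟨fun q => if q ∈ X then W q else V q, fun q hq => by simp [hq], ?_⟩
        rw [ih _ W ?_]
        · exact hs
        · intro x hx
          by_cases hxX : x ∈ X
          · simp [hxX]
          · simp only [hxX, if_neg, ite_false]
            rw [hW x hxX]
            exact h x (by simp [freeVars, hx, hxX])
  | qall X φ ih =>
      intro V V' h
      simp only [Sat]
      constructor
      · intro hall W' hW'
        have := hall (fun q => if q ∈ X then W' q else V q) (fun q hq => by simp [hq])
        rw [ih _ W' ?_] at this
        · exact this
        · intro x hx
          by_cases hxX : x ∈ X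
          · simp [hxX]
          · simp only [hxX, if_neg, ite_false]
            rw [hW' x hxX]
            exact h x (by simp [freeVars, hx, hxX])
      · intro hall W hW
        have := hall (fun q => if q ∈ X then W q else V' q) (fun q hq => by simp [hq])
        rw [ih _ W ?_] at this
        · exact this
        · intro x hx
          by_cases hxX : x ∈ X
          · simp [hxX]
          · simp only [hxX, if_neg, ite_false]
            rw [hW x hxX]
            exact (h x (by simp [freeVars, hx, hxX])).symm

theorem sat_bigAnd (V : ℕ → Bool) : ∀ l : List Fml,
    (Sat V (bigAnd l) ↔ ∀ ψ ∈ l, Sat V ψ) := by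
  intro l
  induction l with
  | nil => simp [bigAnd, Sat]
  | cons a l ih =>
      cases l with
      | nil => simp [bigAnd]
      | cons b l =>
          simp only [bigAnd, Sat] at ih ⊢
          rw [ih]
          simp [and_assoc]

theorem mem_foldr_union (l : List (Finset ℕ)) (a : ℕ) :
    a ∈ l.foldr (· ∪ ·) ∅ ↔ ∃ s ∈ l, a ∈ s := by
  induction l with
  | nil => simp
  | cons s l ih => simp [ih]

end Fml

theorem mk_mem_zipIdx_swap_iff {α : Type*} {l : List α} {i : ℕ} {a : α} :
    (i, a) ∈ l.zipIdx.map Prod.swap ↔ l[i]? = some a := by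
  rw [List.mem_map]
  constructor
  · rintro ⟨⟨b, j⟩, h, he⟩
    simp only [Prod.swap, Prod.mk.injEq] at he
    obtain ⟨rfl, rfl⟩ := he
    exact List.mk_mem_zipIdx_iff_getElem?.1 h
  · intro h
    exact ⟨(a, i), List.mk_mem_zipIdx_iff_getElem?.2 h, rfl⟩

theorem find?_map_pair {α : Type*} (l : List α) (k : α → ℕ) (g : α → Fml) (q : ℕ) :
    (l.map (fun a => (k a, g a))).find? (fun e => e.1 == q) =
      (l.find? (fun a => k a == q)).map (fun a => (k a, g a)) := by
  induction l with
  | nil => rfl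
  | cons a l ih =>
      simp only [List.map_cons, List.find?_cons]
      by_cases h : k a == q
      · simp [h]
      · simp only [h]
        simpa using ih

theorem find?_eq_of_nodup_keys {α : Type*} (l : List α) (k : α → ℕ)
    (hnd : (l.map k).Nodup) (a : α) (ha : a ∈ l) :
    l.find? (fun b => k b == k a) = some a := by
  induction l with
  | nil => simp at ha
  | cons b l ih =>
      simp only [List.map_cons, List.nodup_cons] at hnd
      rcases List.mem_cons.1 ha with rfl | ha'
      · simp [List.find?_cons]
      · have hne : (k b == k a) = false := by
          simp only [beq_eq_false_iff_ne, ne_eq]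
          intro hkk
          exact hnd.1 (hkk ▸ List.mem_map_of_mem (f := k) ha')
        rw [List.find?_cons, hne]
        exact ih hnd.2 ha'

theorem get?_key_inj {α : Type*} (l : List α) (k : α → ℕ)
    (hnd : (l.map k).Nodup) {i j : ℕ} {e e' : α}
    (hi : l[i]? = some e) (hj : l[j]? = some e') (hk : k e = k e') : i = j := by
  have h1 : (l.map k)[i]? = some (k e) := by rw [List.getElem?_map, hi]; rfl
  have h2 : (l.map k)[j]? = some (k e') := by rw [List.getElem?_map, hj]; rfl
  refine (List.getElem?_inj ?_ hnd).1 ?_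
  · have := (List.getElem?_eq_some_iff.1 h1).1
    simpa using this
  · rw [h1, h2, hk]



namespace Fml

/-- Valuation induced by a substitution. -/
noncomputable def sVal (σ : List (ℕ × Fml)) (V : ℕ → Bool) (q : ℕ) : Bool :=
  match σ.find? (fun e => e.1 == q) with
  | some e => decide (Sat V e.2)
  | none => V q

theorem sat_simSubst_bool (V : ℕ → Bool) : ∀ (β : Fml) (σ : List (ℕ × Fml)),
    isBool β = true → (Sat V (simSubst σ β) ↔ Sat (sVal σ V) β) := by
  intro β
  induction β with
  | var p =>
      intro σ _
      simp only [simSubst, Sat, sVal]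
      cases h : σ.find? (fun e => e.1 == p) with
      | none => simp [Sat]
      | some e => simp [Sat, decide_eq_true_iff]
  | tru => intro σ _; simp [simSubst, Sat]
  | fls => intro σ _; simp [simSubst, Sat]
  | neg φ ih =>
      intro σ hb
      simp only [simSubst, Sat]
      rw [ih σ (by simpa [isBool] using hb)]
  | conj φ ψ ih1 ih2 =>
      intro σ hb
      simp only [isBool, Bool.and_eq_true] at hb
      simp only [simSubst, Sat]
      rw [ih1 σ hb.1, ih2 σ hb.2]
  | disj φ ψ ih1 ih2 =>
      intro σ hb
      simp only [isBool, Bool.and_eq_true] at hb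
      simp only [simSubst, Sat]
      rw [ih1 σ hb.1, ih2 σ hb.2]
  | imp φ ψ ih1 ih2 =>
      intro σ hb
      simp only [isBool, Bool.and_eq_true] at hb
      simp only [simSubst, Sat]
      rw [ih1 σ hb.1, ih2 σ hb.2]
  | biff φ ψ ih1 ih2 =>
      intro σ hb
      simp only [isBool, Bool.and_eq_true] at hb
      simp only [simSubst, Sat]
      rw [ih1 σ hb.1, ih2 σ hb.2]
  | qex X φ ih => intro σ hb; simp [isBool] at hb
  | qall X φ ih => intro σ hb; simp [isBool] at hb

theorem freeVars_simSubst_subset (S : Finset ℕ) : ∀ (ψ : Fml) (σ : List (ℕ × Fml)),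
    (∀ e ∈ σ, freeVars e.2 ⊆ S) → freeVars (simSubst σ ψ) ⊆ freeVars ψ ∪ S := by
  intro ψ
  induction ψ with
  | var p =>
      intro σ hσ
      simp only [simSubst]
      cases h : σ.find? (fun e => e.1 == p) with
      | none => simp [freeVars]
      | some e =>
          have he : e ∈ σ := List.mem_of_find?_eq_some h
          simp only [h, Option.map_some, Option.getD_some]
          exact (hσ e he).trans Finset.subset_union_right
  | tru => intro σ hσ; simp [simSubst, freeVars]
  | fls => intro σ hσ; simp [simSubst, freeVars]
  | neg φ ih => intro σ hσ; exact ih σ hσ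
  | conj φ ψ ih1 ih2 =>
      intro σ hσ
      simp only [simSubst, freeVars]
      intro a ha
      rcases Finset.mem_union.1 ha with h | h
      · rcases Finset.mem_union.1 (ih1 σ hσ h) with h2 | h2
        · exact Finset.mem_union_left _ (Finset.mem_union_left _ h2)
        · exact Finset.mem_union_right _ h2
      · rcases Finset.mem_union.1 (ih2 σ hσ h) with h2 | h2
        · exact Finset.mem_union_left _ (Finset.mem_union_right _ h2)
        · exact Finset.mem_union_right _ h2
  | disj φ ψ ih1 ih2 =>
      intro σ hσ
      simp only [simSubst, freeVars]
      intro a ha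
      rcases Finset.mem_union.1 ha with h | h
      · rcases Finset.mem_union.1 (ih1 σ hσ h) with h2 | h2
        · exact Finset.mem_union_left _ (Finset.mem_union_left _ h2)
        · exact Finset.mem_union_right _ h2
      · rcases Finset.mem_union.1 (ih2 σ hσ h) with h2 | h2
        · exact Finset.mem_union_left _ (Finset.mem_union_right _ h2)
        · exact Finset.mem_union_right _ h2
  | imp φ ψ ih1 ih2 =>
      intro σ hσ
      simp only [simSubst, freeVars]
      intro a ha
      rcases Finset.mem_union.1 ha with h | h
      · rcases Finset.mem_union.1 (ih1 σ hσ h) with h2 | h2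
        · exact Finset.mem_union_left _ (Finset.mem_union_left _ h2)
        · exact Finset.mem_union_right _ h2
      · rcases Finset.mem_union.1 (ih2 σ hσ h) with h2 | h2
        · exact Finset.mem_union_left _ (Finset.mem_union_right _ h2)
        · exact Finset.mem_union_right _ h2
  | biff φ ψ ih1 ih2 =>
      intro σ hσ
      simp only [simSubst, freeVars]
      intro a ha
      rcases Finset.mem_union.1 ha with h | h
      · rcases Finset.mem_union.1 (ih1 σ hσ h) with h2 | h2
        · exact Finset.mem_union_left _ (Finset.mem_union_left _ h2)
        · exact Finset.mem_union_right _ h2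
      · rcases Finset.mem_union.1 (ih2 σ hσ h) with h2 | h2
        · exact Finset.mem_union_left _ (Finset.mem_union_right _ h2)
        · exact Finset.mem_union_right _ h2
  | qex X φ ih =>
      intro σ hσ
      simp only [simSubst, freeVars]
      intro a ha
      rcases Finset.mem_sdiff.1 ha with ⟨ha1, ha2⟩
      have := ih (σ.filter (fun e => decide (e.1 ∉ X)))
        (fun e he => hσ e (List.mem_of_mem_filter he)) ha1
      rcases Finset.mem_union.1 this with h | h
      · exact Finset.mem_union_left _ (Finset.mem_sdiff.2 ⟨h, ha2⟩)
      · exact Finset.mem_union_right _ h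
  | qall X φ ih =>
      intro σ hσ
      simp only [simSubst, freeVars]
      intro a ha
      rcases Finset.mem_sdiff.1 ha with ⟨ha1, ha2⟩
      have := ih (σ.filter (fun e => decide (e.1 ∉ X)))
        (fun e he => hσ e (List.mem_of_mem_filter he)) ha1
      rcases Finset.mem_union.1 this with h | h
      · exact Finset.mem_union_left _ (Finset.mem_sdiff.2 ⟨h, ha2⟩)
      · exact Finset.mem_union_right _ h

theorem vars_simSubst_of_mem : ∀ (β : Fml) (σ : List (ℕ × Fml)) (p : ℕ) (e : ℕ × Fml),
    isBool β = true → p ∈ freeVars β → σ.find? (fun e => e.1 == p) = some e →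
    vars e.2 ⊆ vars (simSubst σ β) := by
  intro β
  induction β with
  | var q =>
      intro σ p e _ hp hfind
      simp only [freeVars, Finset.mem_singleton] at hp
      subst hp
      simp only [simSubst, hfind, Option.map_some, Option.getD_some]
      exact subset_rfl
  | tru => intro σ p e _ hp; simp [freeVars] at hp
  | fls => intro σ p e _ hp; simp [freeVars] at hp
  | neg φ ih => intro σ p e hb hp hfind; exact ih σ p e (by simpa [isBool] using hb) hp hfind
  | conj φ ψ ih1 ih2 =>
      intro σ p e hb hp hfind
      simp only [isBool, Bool.and_eq_true] at hb
      simp only [freeVars, Finset.mem_union] at hp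
      simp only [simSubst, vars]
      rcases hp with hp | hp
      · exact (ih1 σ p e hb.1 hp hfind).trans Finset.subset_union_left
      · exact (ih2 σ p e hb.2 hp hfind).trans Finset.subset_union_right
  | disj φ ψ ih1 ih2 =>
      intro σ p e hb hp hfind
      simp only [isBool, Bool.and_eq_true] at hb
      simp only [freeVars, Finset.mem_union] at hp
      simp only [simSubst, vars]
      rcases hp with hp | hp
      · exact (ih1 σ p e hb.1 hp hfind).trans Finset.subset_union_left
      · exact (ih2 σ p e hb.2 hp hfind).trans Finset.subset_union_right
  | imp φ ψ ih1 ih2 =>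
      intro σ p e hb hp hfind
      simp only [isBool, Bool.and_eq_true] at hb
      simp only [freeVars, Finset.mem_union] at hp
      simp only [simSubst, vars]
      rcases hp with hp | hp
      · exact (ih1 σ p e hb.1 hp hfind).trans Finset.subset_union_left
      · exact (ih2 σ p e hb.2 hp hfind).trans Finset.subset_union_right
  | biff φ ψ ih1 ih2 =>
      intro σ p e hb hp hfind
      simp only [isBool, Bool.and_eq_true] at hb
      simp only [freeVars, Finset.mem_union] at hp
      simp only [simSubst, vars]
      rcases hp with hp | hp
      · exact (ih1 σ p e hb.1 hp hfind).trans Finset.subset_union_left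
      · exact (ih2 σ p e hb.2 hp hfind).trans Finset.subset_union_right
  | qex X φ ih => intro σ p e hb; simp [isBool] at hb
  | qall X φ ih => intro σ p e hb; simp [isBool] at hb

theorem mem_freeVars_simSubst : ∀ (β : Fml) (σ : List (ℕ × Fml)) (q : ℕ),
    isBool β = true → q ∈ freeVars β → σ.find? (fun e => e.1 == q) = none →
    q ∈ freeVars (simSubst σ β) := by
  intro β
  induction β with
  | var p =>
      intro σ q _ hq hfind
      simp only [freeVars, Finset.mem_singleton] at hq
      subst hq
      simp [simSubst, hfind, freeVars]
  | tru => intro σ q _ hq; simp [freeVars] at hq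
  | fls => intro σ q _ hq; simp [freeVars] at hq
  | neg φ ih => intro σ q hb hq hfind; exact ih σ q (by simpa [isBool] using hb) hq hfind
  | conj φ ψ ih1 ih2 =>
      intro σ q hb hq hfind
      simp only [isBool, Bool.and_eq_true] at hb
      simp only [simSubst, freeVars, Finset.mem_union] at hq ⊢
      rcases hq with hq | hq
      · exact Or.inl (ih1 σ q hb.1 hq hfind)
      · exact Or.inr (ih2 σ q hb.2 hq hfind)
  | disj φ ψ ih1 ih2 =>
      intro σ q hb hq hfind
      simp only [isBool, Bool.and_eq_true] at hb
      simp only [simSubst, freeVars, Finset.mem_union] at hq ⊢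
      rcases hq with hq | hq
      · exact Or.inl (ih1 σ q hb.1 hq hfind)
      · exact Or.inr (ih2 σ q hb.2 hq hfind)
  | imp φ ψ ih1 ih2 =>
      intro σ q hb hq hfind
      simp only [isBool, Bool.and_eq_true] at hb
      simp only [simSubst, freeVars, Finset.mem_union] at hq ⊢
      rcases hq with hq | hq
      · exact Or.inl (ih1 σ q hb.1 hq hfind)
      · exact Or.inr (ih2 σ q hb.2 hq hfind)
  | biff φ ψ ih1 ih2 =>
      intro σ q hb hq hfind
      simp only [isBool, Bool.and_eq_true] at hb
      simp only [simSubst, freeVars, Finset.mem_union] at hq ⊢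
      rcases hq with hq | hq
      · exact Or.inl (ih1 σ q hb.1 hq hfind)
      · exact Or.inr (ih2 σ q hb.2 hq hfind)
  | qex X φ ih => intro σ q hb; simp [isBool] at hb
  | qall X φ ih => intro σ q hb; simp [isBool] at hb

end Fml


theorem find?_map_pair2 {α : Type*} (l : List α) (f : α → ℕ × Fml) (q : ℕ) :
    (l.map f).find? (fun e => e.1 == q) = (l.find? (fun a => (f a).1 == q)).map f := by
  induction l with
  | nil => rfl
  | cons a l ih =>
      simp only [List.map_cons, List.find?_cons]
      by_cases h : (f a).1 == q
      · simp [h]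
      · simp only [h]
        simpa using ih

namespace Fml

theorem sat_rename (ρ : ℕ → ℕ) : ∀ (ψ : Fml) (l : List ℕ) (V : ℕ → Bool),
    (∀ x ∈ l, ρ x ∉ vars ψ) →
    (Sat V (simSubst (l.map (fun x => (x, var (ρ x)))) ψ) ↔
      Sat (fun q => if q ∈ l then V (ρ q) else V q) ψ) := by
  intro ψ
  induction ψ with
  | var p =>
      intro l V _
      simp only [simSubst, find?_map_pair2]
      by_cases hp : p ∈ l
      · have h2 : l.find? (fun a => ((a, var (ρ a)) : ℕ × Fml).1 == p) = some p := by
          cases hfind : l.find? (fun a => ((a, var (ρ a)) : ℕ × Fml).1 == p) with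
          | none =>
              exfalso
              have := List.find?_eq_none.1 hfind p hp
              simp at this
          | some a =>
              have := List.find?_some hfind
              simp only [beq_iff_eq] at this
              rw [this]
        simp [h2, Sat, hp]
      · have h2 : l.find? (fun a => ((a, var (ρ a)) : ℕ × Fml).1 == p) = none := by
          apply List.find?_eq_none.2
          intro a ha
          simp only [beq_iff_eq]
          intro h; exact hp (h ▸ ha)
        simp [h2, Sat, hp]
  | tru => intro l V _; simp [simSubst, Sat]
  | fls => intro l V _; simp [simSubst, Sat]
  | neg φ ih =>
      intro l V hf
      simp only [simSubst, Sat]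
      rw [ih l V (by simpa [vars] using hf)]
  | conj φ ψ ih1 ih2 =>
      intro l V hf
      simp only [vars] at hf
      simp only [simSubst, Sat]
      rw [ih1 l V (fun x hx => fun hc => hf x hx (Finset.mem_union_left _ hc)),
        ih2 l V (fun x hx => fun hc => hf x hx (Finset.mem_union_right _ hc))]
  | disj φ ψ ih1 ih2 =>
      intro l V hf
      simp only [vars] at hf
      simp only [simSubst, Sat]
      rw [ih1 l V (fun x hx => fun hc => hf x hx (Finset.mem_union_left _ hc)),
        ih2 l V (fun x hx => fun hc => hf x hx (Finset.mem_union_right _ hc))]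
  | imp φ ψ ih1 ih2 =>
      intro l V hf
      simp only [vars] at hf
      simp only [simSubst, Sat]
      rw [ih1 l V (fun x hx => fun hc => hf x hx (Finset.mem_union_left _ hc)),
        ih2 l V (fun x hx => fun hc => hf x hx (Finset.mem_union_right _ hc))]
  | biff φ ψ ih1 ih2 =>
      intro l V hf
      simp only [vars] at hf
      simp only [simSubst, Sat]
      rw [ih1 l V (fun x hx => fun hc => hf x hx (Finset.mem_union_left _ hc)),
        ih2 l V (fun x hx => fun hc => hf x hx (Finset.mem_union_right _ hc))]
  | qex Y ψ ih =>
      intro l V hf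
      have hfY : ∀ x ∈ l, ρ x ∉ Y ∧ ρ x ∉ vars ψ := by
        intro x hx
        have := hf x hx
        simp only [vars, Finset.mem_union, not_or] at this
        exact this
      simp only [simSubst, List.filter_map, Sat]
      constructor
      · rintro ⟨W, hWV, hs⟩
        rw [ih _ W (fun x hx => (hfY x (List.mem_of_mem_filter hx)).2)] at hs
        refine ⟨fun q => if q ∈ Y then W q else if q ∈ l then V (ρ q) else V q,
          fun q hq => by simp [hq], ?_⟩
        rw [sat_congr ψ _ _ ?_] at hs
        · exact hs
        · intro x hx
          simp only [List.mem_filter, Function.comp_apply, decide_eq_true_eq]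
          by_cases hxY : x ∈ Y
          · simp [hxY]
          · by_cases hxl : x ∈ l
            · simp only [hxl, hxY, not_false_eq_true, and_self, if_true, if_false,
                ite_true, ite_false, true_and]
              rw [hWV (ρ x) (hfY x hxl).1]
            · simp only [hxl, hxY, false_and, if_false, ite_false]
              rw [hWV x hxY]
      · rintro ⟨W1, hW1, hs⟩
        refine ⟨fun q => if q ∈ Y then W1 q else V q, fun q hq => by simp [hq], ?_⟩
        rw [ih _ _ (fun x hx => (hfY x (List.mem_of_mem_filter hx)).2)]
        rw [sat_congr ψ _ W1 ?_]
        · exact hs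
        · intro x hx
          simp only [List.mem_filter, Function.comp_apply, decide_eq_true_eq]
          by_cases hxY : x ∈ Y
          · simp [hxY]
          · by_cases hxl : x ∈ l
            · simp only [hxl, hxY, not_false_eq_true, and_self, if_true, if_false,
                ite_true, ite_false, true_and]
              rw [if_neg (hfY x hxl).1, hW1 x hxY]
              simp [hxl]
            · simp only [hxl, hxY, false_and, if_false, ite_false]
              rw [hW1 x hxY]
              simp [hxl]
  | qall Y ψ ih =>
      intro l V hf
      have hfY : ∀ x ∈ l, ρ x ∉ Y ∧ ρ x ∉ vars ψ := by
        intro x hx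
        have := hf x hx
        simp only [vars, Finset.mem_union, not_or] at this
        exact this
      simp only [simSubst, List.filter_map, Sat]
      constructor
      · intro hall W1 hW1
        have hs := hall (fun q => if q ∈ Y then W1 q else V q) (fun q hq => by simp [hq])
        rw [ih _ _ (fun x hx => (hfY x (List.mem_of_mem_filter hx)).2)] at hs
        rw [sat_congr ψ _ W1 ?_] at hs
        · exact hs
        · intro x hx
          simp only [List.mem_filter, Function.comp_apply, decide_eq_true_eq]
          by_cases hxY : x ∈ Y
          · simp [hxY]
          · by_cases hxl : x ∈ l
            · simp only [hxl, hxY, not_false_eq_true, and_self, if_true, if_false,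
                ite_true, ite_false, true_and]
              rw [if_neg (hfY x hxl).1, hW1 x hxY]
              simp [hxl]
            · simp only [hxl, hxY, false_and, if_false, ite_false]
              rw [hW1 x hxY]
              simp [hxl]
      · intro hall W hWV
        have hs := hall (fun q => if q ∈ Y then W q else if q ∈ l then V (ρ q) else V q)
          (fun q hq => by simp [hq])
        rw [ih _ W (fun x hx => (hfY x (List.mem_of_mem_filter hx)).2)]
        rw [sat_congr ψ _ _ ?_]
        · exact hs
        · intro x hx
          simp only [List.mem_filter, Function.comp_apply, decide_eq_true_eq]
          by_cases hxY : x ∈ Y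
          · simp [hxY]
          · by_cases hxl : x ∈ l
            · simp only [hxl, hxY, not_false_eq_true, and_self, if_true, if_false,
                ite_true, ite_false, true_and]
              rw [hWV (ρ x) (hfY x hxl).1]
            · simp only [hxl, hxY, false_and, if_false, ite_false]
              rw [hWV x hxY]

end Fml


namespace Fml

/-- A valuation falsifying `ψ`, agreeing with `V` outside `X`, if one exists. -/
noncomputable def badW (V : ℕ → Bool) (X : Finset ℕ) (ψ : Fml) : ℕ → Bool :=
  if h : ∃ W : ℕ → Bool, (∀ q ∉ X, W q = V q) ∧ ¬ Sat W ψ then h.choose else V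

theorem badW_agree (V : ℕ → Bool) (X : Finset ℕ) (ψ : Fml) (q : ℕ) (hq : q ∉ X) :
    badW V X ψ q = V q := by
  unfold badW
  split
  next h => exact h.choose_spec.1 q hq
  next => rfl

theorem badW_spec (V : ℕ → Bool) (X : Finset ℕ) (ψ : Fml) (h : ¬ Sat V (qall X ψ)) :
    ¬ Sat (badW V X ψ) ψ := by
  simp only [Sat, not_forall] at h
  rcases h with ⟨W, h1, h2⟩
  have hex : ∃ W : ℕ → Bool, (∀ q ∉ X, W q = V q) ∧ ¬ Sat W ψ := ⟨W, h1, h2⟩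
  unfold badW
  rw [dif_pos hex]
  exact hex.choose_spec.2

/-- A valuation satisfying `ψ`, agreeing with `V` outside `X`, if one exists. -/
noncomputable def goodW (V : ℕ → Bool) (X : Finset ℕ) (ψ : Fml) : ℕ → Bool :=
  if h : ∃ W : ℕ → Bool, (∀ q ∉ X, W q = V q) ∧ Sat W ψ then h.choose else V

theorem goodW_agree (V : ℕ → Bool) (X : Finset ℕ) (ψ : Fml) (q : ℕ) (hq : q ∉ X) :
    goodW V X ψ q = V q := by
  unfold goodW
  split
  next h => exact h.choose_spec.1 q hq
  next => rfl

theorem goodW_spec (V : ℕ → Bool) (X : Finset ℕ) (ψ : Fml) (h : Sat V (qex X ψ)) :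
    Sat (goodW V X ψ) ψ := by
  have h' : ∃ W : ℕ → Bool, (∀ q ∉ X, W q = V q) ∧ Sat W ψ := h
  unfold goodW
  rw [dif_pos h']
  exact h'.choose_spec.2

end Fml

theorem vars_entryFml (e : ℕ × Quant × Finset ℕ × Fml) :
    Fml.vars (entryFml e) = e.2.2.1 ∪ Fml.vars e.2.2.2 := by
  cases h : e.2.1 <;> simp [entryFml, qApply, h, Fml.vars]

namespace OneLevelData

open Fml

variable {φ : Fml} (D : OneLevelData φ)

theorem mem_Nset {q : ℕ} : q ∈ D.Nset ↔
    ∃ i e, D.L[i]? = some e ∧ ∃ x ∈ e.2.2.1, D.negC i x = q := by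
  unfold Nset
  rw [Fml.mem_foldr_union]
  constructor
  · rintro ⟨s, hs, hq⟩
    rcases List.mem_map.1 hs with ⟨⟨i, e⟩, hie, rfl⟩
    rcases Finset.mem_image.1 hq with ⟨x, hx, hxq⟩
    exact ⟨i, e, mk_mem_zipIdx_swap_iff.1 hie, x, hx, hxq⟩
  · rintro ⟨i, e, hie, x, hx, rfl⟩
    exact ⟨_, List.mem_map.2 ⟨(i, e), mk_mem_zipIdx_swap_iff.2 hie, rfl⟩,
      Finset.mem_image.2 ⟨x, hx, rfl⟩⟩

theorem mem_Pset {q : ℕ} : q ∈ D.Pset ↔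
    ((∃ i e, D.L[i]? = some e ∧ ∃ x ∈ e.2.2.1, D.posC i x = q) ∨
      (∃ (i : ℕ) (e : ℕ × Quant × Finset ℕ × Fml), D.L[i]? = some e ∧ e.1 = q)) := by
  unfold Pset
  rw [Fml.mem_foldr_union]
  constructor
  · rintro ⟨s, hs, hq⟩
    rcases List.mem_map.1 hs with ⟨⟨i, e⟩, hie, rfl⟩
    rcases Finset.mem_union.1 hq with hq | hq
    · rcases Finset.mem_image.1 hq with ⟨x, hx, hxq⟩
      exact Or.inl ⟨i, e, mk_mem_zipIdx_swap_iff.1 hie, x, hx, hxq⟩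
    · exact Or.inr ⟨i, e, mk_mem_zipIdx_swap_iff.1 hie, (Finset.mem_singleton.1 hq).symm⟩
  · rintro (⟨i, e, hie, x, hx, rfl⟩ | ⟨i, e, hie, rfl⟩)
    · exact ⟨_, List.mem_map.2 ⟨(i, e), mk_mem_zipIdx_swap_iff.2 hie, rfl⟩,
        Finset.mem_union_left _ (Finset.mem_image.2 ⟨x, hx, rfl⟩)⟩
    · exact ⟨_, List.mem_map.2 ⟨(i, e), mk_mem_zipIdx_swap_iff.2 hie, rfl⟩,
        Finset.mem_union_right _ (Finset.mem_singleton.2 rfl)⟩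

theorem find?_key {i : ℕ} {e : ℕ × Quant × Finset ℕ × Fml} (h : D.L[i]? = some e) :
    (D.L.map (fun e => (e.1, entryFml e))).find? (fun x => x.1 == e.1)
      = some (e.1, entryFml e) := by
  have hmem : e ∈ D.L := List.mem_of_getElem? h
  have h1 := find?_map_pair2 D.L (fun e => (e.1, entryFml e)) e.1
  rw [h1]
  have h2 : D.L.find? (fun a => ((fun e => (e.1, entryFml e)) a).1 == e.1) = some e :=
    find?_eq_of_nodup_keys D.L (fun e => e.1) D.hnodup e hmem
  rw [h2]
  rfl

theorem sVal_key (V : ℕ → Bool) {i : ℕ} {e : ℕ × Quant × Finset ℕ × Fml}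
    (h : D.L[i]? = some e) :
    sVal (D.L.map (fun e => (e.1, entryFml e))) V e.1 = decide (Sat V (entryFml e)) := by
  unfold sVal
  rw [D.find?_key h]

theorem sVal_nonkey (V : ℕ → Bool) {q : ℕ} (hq : ∀ e ∈ D.L, e.1 ≠ q) :
    sVal (D.L.map (fun e => (e.1, entryFml e))) V q = V q := by
  unfold sVal
  have : (D.L.map (fun e => (e.1, entryFml e))).find? (fun x => x.1 == q) = none := by
    apply List.find?_eq_none.2
    intro a ha
    rcases List.mem_map.1 ha with ⟨e, he, rfl⟩
    simpa using hq e he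
  rw [this]

theorem key_unique {i j : ℕ} {e e' : ℕ × Quant × Finset ℕ × Fml}
    (hi : D.L[i]? = some e) (hj : D.L[j]? = some e') (hk : e.1 = e'.1) :
    i = j ∧ e = e' := by
  have hij : i = j := get?_key_inj D.L (fun e => e.1) D.hnodup hi hj hk
  subst hij
  rw [hi] at hj
  exact ⟨rfl, Option.some.inj hj⟩

theorem posC_inj {i i' x x' : ℕ} {e e' : ℕ × Quant × Finset ℕ × Fml}
    (hi : D.L[i]? = some e) (hi' : D.L[i']? = some e')
    (hx : x ∈ e.2.2.1) (hx' : x' ∈ e'.2.2.1) (h : D.posC i x = D.posC i' x') :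
    i = i' ∧ x = x' := by
  have := D.hcdist i i' e (Option.mem_def.2 hi) e' (Option.mem_def.2 hi') x hx x' hx'
    true true (by simpa using h)
  simp only [Prod.mk.injEq] at this
  exact ⟨this.1, this.2.1⟩

theorem negC_inj {i i' x x' : ℕ} {e e' : ℕ × Quant × Finset ℕ × Fml}
    (hi : D.L[i]? = some e) (hi' : D.L[i']? = some e')
    (hx : x ∈ e.2.2.1) (hx' : x' ∈ e'.2.2.1) (h : D.negC i x = D.negC i' x') :
    i = i' ∧ x = x' := by
  have := D.hcdist i i' e (Option.mem_def.2 hi) e' (Option.mem_def.2 hi') x hx x' hx'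
    false false (by simpa using h)
  simp only [Prod.mk.injEq] at this
  exact ⟨this.1, this.2.1⟩

theorem posC_ne_negC {i i' x x' : ℕ} {e e' : ℕ × Quant × Finset ℕ × Fml}
    (hi : D.L[i]? = some e) (hi' : D.L[i']? = some e')
    (hx : x ∈ e.2.2.1) (hx' : x' ∈ e'.2.2.1) :
    D.posC i x ≠ D.negC i' x' := by
  intro h
  have := D.hcdist i i' e (Option.mem_def.2 hi) e' (Option.mem_def.2 hi') x hx x' hx'
    true false (by simpa using h)
  simp at this

theorem vars_entry_subset {i : ℕ} {e : ℕ × Quant × Finset ℕ × Fml}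
    (hi : D.L[i]? = some e) (hkey : e.1 ∈ D.β.freeVars) :
    Fml.vars (entryFml e) ⊆ Fml.vars φ := by
  conv_rhs => rw [D.hdec]
  exact Fml.vars_simSubst_of_mem D.β _ e.1 (e.1, entryFml e) D.hbool hkey (D.find?_key hi)

theorem freeVars_renameEntry (i : ℕ) (e : ℕ × Quant × Finset ℕ × Fml) :
    freeVars (D.renameEntry i e) ⊆ freeVars e.2.2.2 ∪ e.2.2.1.image (D.posC i) := by
  unfold renameEntry
  apply Fml.freeVars_simSubst_subset
  intro a ha
  rcases List.mem_map.1 ha with ⟨x, hx, rfl⟩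
  intro b hb
  simp only [freeVars, Finset.mem_singleton] at hb
  subst hb
  exact Finset.mem_image.2 ⟨x, Finset.mem_toList.1 hx, rfl⟩

theorem sat_renameEntry (i : ℕ) (e : ℕ × Quant × Finset ℕ × Fml)
    (hfresh : ∀ x ∈ e.2.2.1, D.posC i x ∉ vars e.2.2.2) (U : ℕ → Bool) :
    Sat U (D.renameEntry i e) ↔
      Sat (fun q => if q ∈ e.2.2.1 then U (D.posC i q) else U q) e.2.2.2 := by
  unfold renameEntry
  rw [Fml.sat_rename (D.posC i) e.2.2.2 e.2.2.1.toList U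
    (fun x hx => hfresh x (Finset.mem_toList.1 hx))]
  apply Fml.sat_congr
  intro x _
  by_cases h : x ∈ e.2.2.1 <;> simp [h, Finset.mem_toList]

theorem sat_Tall (U : ℕ → Bool) : Sat U D.Tall ↔
    ((∀ i e, D.L[i]? = some e → (U e.1 = true ↔ Sat U (D.renameEntry i e))) ∧
     (∀ i e, D.L[i]? = some e → Sat U (D.linkEntry i e)) ∧ Sat U D.β) := by
  unfold Tall constraints
  simp only [Sat, Fml.sat_bigAnd]
  constructor
  · rintro ⟨⟨hA, hB⟩, hβ⟩
    refine ⟨?_, ?_, hβ⟩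
    · intro i e hie
      have := hA _ (List.mem_map.2 ⟨(i, e), mk_mem_zipIdx_swap_iff.2 hie, rfl⟩)
      simpa [Sat] using this
    · intro i e hie
      exact hB _ (List.mem_map.2 ⟨(i, e), mk_mem_zipIdx_swap_iff.2 hie, rfl⟩)
  · rintro ⟨h1, h2, hβ⟩
    refine ⟨⟨?_, ?_⟩, hβ⟩
    · intro ψ hψ
      rcases List.mem_map.1 hψ with ⟨⟨i, e⟩, hie, rfl⟩
      have := h1 i e (mk_mem_zipIdx_swap_iff.1 hie)
      simpa [Sat] using this
    · intro ψ hψ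
      rcases List.mem_map.1 hψ with ⟨⟨i, e⟩, hie, rfl⟩
      exact h2 i e (mk_mem_zipIdx_swap_iff.1 hie)

theorem sat_linkEntry_qall (U : ℕ → Bool) {i : ℕ} {e : ℕ × Quant × Finset ℕ × Fml}
    (hq : e.2.1 = Quant.qall) :
    Sat U (D.linkEntry i e) ↔
      (U e.1 = true → ∀ x ∈ e.2.2.1, U (D.posC i x) = U (D.negC i x)) := by
  unfold linkEntry
  rw [hq]
  simp only [Sat, Fml.sat_bigAnd]
  constructor
  · intro h hp x hx
    have := h hp _ (List.mem_map.2 ⟨x, Finset.mem_toList.2 hx, rfl⟩)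
    simp only [Sat] at this
    exact Bool.eq_iff_iff.2 this
  · intro h hp ψ hψ
    rcases List.mem_map.1 hψ with ⟨x, hx, rfl⟩
    simp only [Sat]
    exact Bool.eq_iff_iff.1 (h hp x (Finset.mem_toList.1 hx))

theorem sat_linkEntry_qex (U : ℕ → Bool) {i : ℕ} {e : ℕ × Quant × Finset ℕ × Fml}
    (hq : e.2.1 = Quant.qex) :
    Sat U (D.linkEntry i e) ↔
      (U e.1 = false → ∀ x ∈ e.2.2.1, U (D.posC i x) = U (D.negC i x)) := by
  unfold linkEntry
  rw [hq]
  simp only [Sat, Fml.sat_bigAnd]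
  constructor
  · intro h hp x hx
    have := h (by simp [hp]) _ (List.mem_map.2 ⟨x, Finset.mem_toList.2 hx, rfl⟩)
    simp only [Sat] at this
    exact Bool.eq_iff_iff.2 this
  · intro h hp ψ hψ
    rcases List.mem_map.1 hψ with ⟨x, hx, rfl⟩
    simp only [Sat]
    have hp' : U e.1 = false := by
      cases hU : U e.1
      · rfl
      · exact absurd hU hp
    exact Bool.eq_iff_iff.1 (h hp' x (Finset.mem_toList.1 hx))

/-- Target value for the positive copy `x⁺ᵢ` in the forward construction. -/
noncomputable def tgt (V W : ℕ → Bool) (i : ℕ) (e : ℕ × Quant × Finset ℕ × Fml) (x : ℕ) : Bool :=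
  if e.1 ∈ D.β.freeVars then
    match e.2.1 with
    | .qall => if Sat V (entryFml e) then W (D.negC i x) else Fml.badW V e.2.2.1 e.2.2.2 x
    | .qex => if Sat V (entryFml e) then Fml.goodW V e.2.2.1 e.2.2.2 x else W (D.negC i x)
  else W (D.negC i x)

/-- First stage: set the positive copies. -/
noncomputable def U1 (V W : ℕ → Bool) (q : ℕ) : Bool :=
  if h : ∃ t : ℕ × (ℕ × Quant × Finset ℕ × Fml) × ℕ,
      D.L[t.1]? = some t.2.1 ∧ t.2.2 ∈ t.2.1.2.2.1 ∧ D.posC t.1 t.2.2 = q then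
    D.tgt V W h.choose.1 h.choose.2.1 h.choose.2.2
  else W q

theorem U1_posC (V W : ℕ → Bool) {i x : ℕ} {e : ℕ × Quant × Finset ℕ × Fml}
    (hi : D.L[i]? = some e) (hx : x ∈ e.2.2.1) :
    D.U1 V W (D.posC i x) = D.tgt V W i e x := by
  have hex : ∃ t : ℕ × (ℕ × Quant × Finset ℕ × Fml) × ℕ,
      D.L[t.1]? = some t.2.1 ∧ t.2.2 ∈ t.2.1.2.2.1 ∧ D.posC t.1 t.2.2 = D.posC i x :=
    ⟨⟨i, e, x⟩, hi, hx, rfl⟩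
  unfold U1
  rw [dif_pos hex]
  obtain ⟨h1, h2, h3⟩ := hex.choose_spec
  obtain ⟨hii, hxx⟩ := D.posC_inj h1 hi h2 hx h3
  have hee : hex.choose.2.1 = e := by
    rw [hii, hi] at h1
    exact (Option.some.inj h1).symm
  rw [hii, hxx, hee]

theorem U1_nonpos (V W : ℕ → Bool) {q : ℕ}
    (hq : ∀ i e x, D.L[i]? = some e → x ∈ e.2.2.1 → D.posC i x ≠ q) :
    D.U1 V W q = W q := by
  unfold U1
  rw [dif_neg]
  rintro ⟨⟨i, e, x⟩, h1, h2, h3⟩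
  exact hq i e x h1 h2 h3

/-- Second stage: set the abbreviation variables. -/
noncomputable def U2 (V W : ℕ → Bool) (q : ℕ) : Bool :=
  if h : ∃ t : ℕ × (ℕ × Quant × Finset ℕ × Fml),
      D.L[t.1]? = some t.2 ∧ t.2.1 = q then
    decide (Sat (D.U1 V W) (D.renameEntry h.choose.1 h.choose.2))
  else D.U1 V W q

theorem U2_key (V W : ℕ → Bool) {i : ℕ} {e : ℕ × Quant × Finset ℕ × Fml}
    (hi : D.L[i]? = some e) :
    D.U2 V W e.1 = decide (Sat (D.U1 V W) (D.renameEntry i e)) := by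
  have hex : ∃ t : ℕ × (ℕ × Quant × Finset ℕ × Fml),
      D.L[t.1]? = some t.2 ∧ t.2.1 = e.1 := ⟨⟨i, e⟩, hi, rfl⟩
  unfold U2
  rw [dif_pos hex]
  obtain ⟨h1, h2⟩ := hex.choose_spec
  obtain ⟨hii, hee⟩ := D.key_unique h1 hi h2
  rw [hii, hee]

theorem U2_nonkey (V W : ℕ → Bool) {q : ℕ} (hq : ∀ e ∈ D.L, e.1 ≠ q) :
    D.U2 V W q = D.U1 V W q := by
  unfold U2
  rw [dif_neg]
  rintro ⟨⟨i, e⟩, h1, h2⟩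
  exact hq e (List.mem_of_getElem? h1) h2

/-- Target value for the negative copy `x⁻ᵢ` in the backward construction. -/
noncomputable def ntgt (V : ℕ → Bool) (i : ℕ) (e : ℕ × Quant × Finset ℕ × Fml) (x : ℕ) : Bool :=
  match e.2.1 with
  | .qall => if Sat V (entryFml e) then V (D.negC i x) else Fml.badW V e.2.2.1 e.2.2.2 x
  | .qex => if Sat V (entryFml e) then Fml.goodW V e.2.2.1 e.2.2.2 x else V (D.negC i x)

/-- The adversary valuation for the negative copies. -/
noncomputable def Wneg (V : ℕ → Bool) (q : ℕ) : Bool :=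
  if h : ∃ t : ℕ × (ℕ × Quant × Finset ℕ × Fml) × ℕ,
      D.L[t.1]? = some t.2.1 ∧ t.2.2 ∈ t.2.1.2.2.1 ∧ D.negC t.1 t.2.2 = q then
    D.ntgt V h.choose.1 h.choose.2.1 h.choose.2.2
  else V q

theorem Wneg_negC (V : ℕ → Bool) {i x : ℕ} {e : ℕ × Quant × Finset ℕ × Fml}
    (hi : D.L[i]? = some e) (hx : x ∈ e.2.2.1) :
    D.Wneg V (D.negC i x) = D.ntgt V i e x := by
  have hex : ∃ t : ℕ × (ℕ × Quant × Finset ℕ × Fml) × ℕ,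
      D.L[t.1]? = some t.2.1 ∧ t.2.2 ∈ t.2.1.2.2.1 ∧ D.negC t.1 t.2.2 = D.negC i x :=
    ⟨⟨i, e, x⟩, hi, hx, rfl⟩
  unfold Wneg
  rw [dif_pos hex]
  obtain ⟨h1, h2, h3⟩ := hex.choose_spec
  obtain ⟨hii, hxx⟩ := D.negC_inj h1 hi h2 hx h3
  have hee : hex.choose.2.1 = e := by
    rw [hii, hi] at h1
    exact (Option.some.inj h1).symm
  rw [hii, hxx, hee]

theorem Wneg_nonneg (V : ℕ → Bool) {q : ℕ}
    (hq : ∀ i e x, D.L[i]? = some e → x ∈ e.2.2.1 → D.negC i x ≠ q) :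
    D.Wneg V q = V q := by
  unfold Wneg
  rw [dif_neg]
  rintro ⟨⟨i, e, x⟩, h1, h2, h3⟩
  exact hq i e x h1 h2 h3

end OneLevelData


namespace Fml

theorem sat_qall_inst (X : Finset ℕ) (ψ : Fml) (V A : ℕ → Bool)
    (h : Sat V (qall X ψ)) (hout : ∀ y ∈ freeVars ψ, y ∉ X → A y = V y) : Sat A ψ := by
  have h2 := h (fun q => if q ∈ X then A q else V q) (fun q hq => by simp [hq])
  rw [sat_congr ψ _ A ?_] at h2
  · exact h2
  · intro x hx
    by_cases hxX : x ∈ X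
    · simp [hxX]
    · simp only [hxX, ite_false, if_neg]
      exact (hout x hx hxX).symm

theorem sat_qex_intro (X : Finset ℕ) (ψ : Fml) (V A : ℕ → Bool)
    (h : Sat A ψ) (hout : ∀ y ∈ freeVars ψ, y ∉ X → A y = V y) : Sat V (qex X ψ) := by
  refine ⟨fun q => if q ∈ X then A q else V q, fun q hq => by simp [hq], ?_⟩
  rw [sat_congr ψ _ A ?_]
  · exact h
  · intro x hx
    by_cases hxX : x ∈ X
    · simp [hxX]
    · simp only [hxX, ite_false, if_neg]
      exact (hout x hx hxX).symm

end Fml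

namespace OneLevelData

open Fml

variable {φ : Fml} (D : OneLevelData φ)

theorem not_pos_of_mem_vars {q : ℕ} (hq : q ∈ Fml.vars φ) :
    ∀ i e x, D.L[i]? = some e → x ∈ e.2.2.1 → D.posC i x ≠ q := fun i e x hi hx h =>
  (D.hcfresh i e (Option.mem_def.2 hi) x hx).1 (h ▸ hq)

theorem not_neg_of_mem_vars {q : ℕ} (hq : q ∈ Fml.vars φ) :
    ∀ i e x, D.L[i]? = some e → x ∈ e.2.2.1 → D.negC i x ≠ q := fun i e x hi hx h =>
  (D.hcfresh i e (Option.mem_def.2 hi) x hx).2.1 (h ▸ hq)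

theorem not_key_of_mem_vars {q : ℕ} (hq : q ∈ Fml.vars φ) :
    ∀ e ∈ D.L, e.1 ≠ q := fun e he h => D.hpnotin e he (h ▸ hq)

theorem notin_Nset_of_mem_vars {q : ℕ} (hq : q ∈ Fml.vars φ) : q ∉ D.Nset := by
  rw [D.mem_Nset]
  rintro ⟨i, e, hi, x, hx, hxq⟩
  exact D.not_neg_of_mem_vars hq i e x hi hx hxq

theorem notin_Pset_of_mem_vars {q : ℕ} (hq : q ∈ Fml.vars φ) : q ∉ D.Pset := by
  rw [D.mem_Pset]
  rintro (⟨i, e, hi, x, hx, hxq⟩ | ⟨i, e, hi, hxq⟩)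
  · exact D.not_pos_of_mem_vars hq i e x hi hx hxq
  · exact D.not_key_of_mem_vars hq e (List.mem_of_getElem? hi) hxq

theorem pos_fresh {i : ℕ} {e : ℕ × Quant × Finset ℕ × Fml}
    (hi : D.L[i]? = some e) (hkey : e.1 ∈ D.β.freeVars) :
    ∀ x ∈ e.2.2.1, D.posC i x ∉ Fml.vars e.2.2.2 := by
  intro x hx hc
  exact (D.hcfresh i e (Option.mem_def.2 hi) x hx).1
    (D.vars_entry_subset hi hkey (by rw [vars_entryFml]; exact Finset.mem_union_right _ hc))

theorem body_free_sub {i : ℕ} {e : ℕ × Quant × Finset ℕ × Fml}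
    (hi : D.L[i]? = some e) (hkey : e.1 ∈ D.β.freeVars) :
    ∀ y ∈ Fml.freeVars e.2.2.2, y ∈ Fml.vars φ := fun y hy =>
  D.vars_entry_subset hi hkey
    (by rw [vars_entryFml]; exact Finset.mem_union_right _ (Fml.freeVars_subset_vars _ hy))

theorem freeVar_nonkey_mem {q : ℕ} (hq : q ∈ D.β.freeVars)
    (hk : ∀ e ∈ D.L, e.1 ≠ q) : q ∈ Fml.freeVars φ := by
  have hfind : (D.L.map (fun e => (e.1, entryFml e))).find? (fun x => x.1 == q) = none := by
    apply List.find?_eq_none.2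
    intro a ha
    rcases List.mem_map.1 ha with ⟨e, he, rfl⟩
    simpa using hk e he
  have := Fml.mem_freeVars_simSubst D.β _ q D.hbool hq hfind
  rwa [← D.hdec] at this

theorem tgt_qall (V W : ℕ → Bool) {i x p : ℕ} {X : Finset ℕ} {ψ : Fml}
    (hkey : p ∈ D.β.freeVars) :
    D.tgt V W i (p, Quant.qall, X, ψ) x =
      if Sat V (entryFml (p, Quant.qall, X, ψ)) then W (D.negC i x) else Fml.badW V X ψ x := by
  unfold tgt
  rw [if_pos hkey]

theorem tgt_qex (V W : ℕ → Bool) {i x p : ℕ} {X : Finset ℕ} {ψ : Fml}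
    (hkey : p ∈ D.β.freeVars) :
    D.tgt V W i (p, Quant.qex, X, ψ) x =
      if Sat V (entryFml (p, Quant.qex, X, ψ)) then Fml.goodW V X ψ x else W (D.negC i x) := by
  unfold tgt
  rw [if_pos hkey]

theorem tgt_junk (V W : ℕ → Bool) {i x : ℕ} {e : ℕ × Quant × Finset ℕ × Fml}
    (hkey : e.1 ∉ D.β.freeVars) :
    D.tgt V W i e x = W (D.negC i x) := by
  unfold tgt
  rw [if_neg hkey]

theorem ntgt_qall (V : ℕ → Bool) {i x p : ℕ} {X : Finset ℕ} {ψ : Fml} :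
    D.ntgt V i (p, Quant.qall, X, ψ) x =
      if Sat V (entryFml (p, Quant.qall, X, ψ)) then V (D.negC i x) else Fml.badW V X ψ x := by
  unfold ntgt
  rfl

theorem ntgt_qex (V : ℕ → Bool) {i x p : ℕ} {X : Finset ℕ} {ψ : Fml} :
    D.ntgt V i (p, Quant.qex, X, ψ) x =
      if Sat V (entryFml (p, Quant.qex, X, ψ)) then Fml.goodW V X ψ x else V (D.negC i x) := by
  unfold ntgt
  rfl

end OneLevelData


open Fml in
theorem OneLevelData.forward_dir {φ : Fml} (D : OneLevelData φ) (V : ℕ → Bool)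
    (hφ : Sat V φ) : Sat V (Fml.qall D.Nset (Fml.qex D.Pset D.Tall)) := by
  have hVs : Sat (sVal (D.L.map (fun e => (e.1, entryFml e))) V) D.β := by
    rw [← Fml.sat_simSubst_bool V D.β _ D.hbool, ← D.hdec]
    exact hφ
  intro W hW
  refine ⟨D.U2 V W, ?_, ?_⟩
  · -- agreement off Pset
    intro q hq
    rw [D.mem_Pset] at hq
    have hnp : ∀ i e x, D.L[i]? = some e → x ∈ e.2.2.1 → D.posC i x ≠ q := by
      intro i e x hi hx hc
      exact hq (Or.inl ⟨i, e, hi, x, hx, hc⟩)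
    have hnk : ∀ e ∈ D.L, e.1 ≠ q := by
      intro e he hc
      obtain ⟨i, hi⟩ := List.mem_iff_getElem?.1 he
      exact hq (Or.inr ⟨i, e, hi, hc⟩)
    rw [D.U2_nonkey V W hnk, D.U1_nonpos V W hnp]
  · -- satisfaction of Tall
    have hWV : ∀ q ∈ Fml.vars φ, W q = V q := fun q hq =>
      hW q (D.notin_Nset_of_mem_vars hq)
    have hU1v : ∀ q ∈ Fml.vars φ, D.U1 V W q = W q := fun q hq =>
      D.U1_nonpos V W (D.not_pos_of_mem_vars hq)
    have hkeyqs : ∀ i e, D.L[i]? = some e →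
        ∀ q ∈ freeVars (D.renameEntry i e), ∀ e' ∈ D.L, e'.1 ≠ q := by
      intro i e hi q hq e' he' hc
      subst hc
      rcases Finset.mem_union.1 (D.freeVars_renameEntry i e hq) with h | h
      · exact D.hpnotfree e' he' e (List.mem_of_getElem? hi) h
      · rcases Finset.mem_image.1 h with ⟨x, hx, hxq⟩
        have hm : e'.1 ∈ D.L.map (fun e => e.1) := List.mem_map_of_mem he'
        rw [← hxq] at hm
        exact (D.hcfresh i e (Option.mem_def.2 hi) x hx).2.2.1 hm
    have hF1 : ∀ i e, D.L[i]? = some e →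
        (Sat (D.U2 V W) (D.renameEntry i e) ↔ Sat (D.U1 V W) (D.renameEntry i e)) := by
      intro i e hi
      apply Fml.sat_congr
      intro q hq
      exact D.U2_nonkey V W (hkeyqs i e hi q hq)
    have hnegfix : ∀ i e x, D.L[i]? = some e → x ∈ e.2.2.1 →
        D.U2 V W (D.negC i x) = W (D.negC i x) := by
      intro i e x hi hx
      have hnk : ∀ e' ∈ D.L, e'.1 ≠ D.negC i x := by
        intro e' he' hc
        have hm : e'.1 ∈ D.L.map (fun e => e.1) := List.mem_map_of_mem he'
        rw [hc] at hm
        exact (D.hcfresh i e (Option.mem_def.2 hi) x hx).2.2.2 hm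
      rw [D.U2_nonkey V W hnk]
      apply D.U1_nonpos
      intro j e' y hj hy hc
      exact D.posC_ne_negC hj hi hy hx hc
    have hposfix : ∀ i e x, D.L[i]? = some e → x ∈ e.2.2.1 →
        D.U2 V W (D.posC i x) = D.tgt V W i e x := by
      intro i e x hi hx
      have hnk : ∀ e' ∈ D.L, e'.1 ≠ D.posC i x := by
        intro e' he' hc
        have hm : e'.1 ∈ D.L.map (fun e => e.1) := List.mem_map_of_mem he'
        rw [hc] at hm
        exact (D.hcfresh i e (Option.mem_def.2 hi) x hx).2.2.1 hm
      rw [D.U2_nonkey V W hnk, D.U1_posC V W hi hx]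
    -- the core evaluation fact
    have hF2 : ∀ i e, D.L[i]? = some e → e.1 ∈ D.β.freeVars →
        (Sat (D.U1 V W) (D.renameEntry i e) ↔ Sat V (entryFml e)) := by
      intro i e hi hkey
      have hfr := D.pos_fresh hi hkey
      rw [D.sat_renameEntry i e hfr]
      have hUpos : ∀ x ∈ e.2.2.1, D.U1 V W (D.posC i x) = D.tgt V W i e x := fun x hx =>
        D.U1_posC V W hi hx
      have hout : ∀ y ∈ freeVars e.2.2.2, y ∉ e.2.2.1 → D.U1 V W y = V y := by
        intro y hy _
        have hyv : y ∈ Fml.vars φ := D.body_free_sub hi hkey y hy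
        rw [hU1v y hyv, hWV y hyv]
      obtain ⟨p, Q, X, ψb⟩ := e
      by_cases hS : Sat V (entryFml (p, Q, X, ψb))
      · simp only [hS, iff_true]
        cases Q with
        | qall =>
            have hS' : Sat V (Fml.qall X ψb) := hS
            apply Fml.sat_qall_inst X ψb V _ hS'
            intro y hy hyX
            simp only [hyX, ite_false, if_neg]
            exact hout y hy hyX
        | qex =>
            have hS' : Sat V (Fml.qex X ψb) := hS
            rw [Fml.sat_congr _ _ (Fml.goodW V X ψb) ?_]
            · exact Fml.goodW_spec V X ψb hS'
            · intro y hy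
              by_cases hyX : y ∈ X
              · simp only [hyX, ite_true, if_pos]
                rw [hUpos y hyX, D.tgt_qex V W hkey, if_pos hS]
              · simp only [hyX, ite_false, if_neg]
                rw [hout y hy hyX, Fml.goodW_agree V X ψb y hyX]
      · simp only [hS, iff_false]
        cases Q with
        | qall =>
            have hS' : ¬ Sat V (Fml.qall X ψb) := hS
            rw [Fml.sat_congr _ _ (Fml.badW V X ψb) ?_]
            · exact Fml.badW_spec V X ψb hS'
            · intro y hy
              by_cases hyX : y ∈ X
              · simp only [hyX, ite_true, if_pos]
                rw [hUpos y hyX, D.tgt_qall V W hkey, if_neg hS]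
              · simp only [hyX, ite_false, if_neg]
                rw [hout y hy hyX, Fml.badW_agree V X ψb y hyX]
        | qex =>
            intro hsat
            apply hS
            exact Fml.sat_qex_intro X ψb V _ hsat (by
              intro y hy hyX
              simp only [hyX, ite_false, if_neg]
              exact hout y hy hyX)
    rw [D.sat_Tall]
    refine ⟨?_, ?_, ?_⟩
    · -- defining constraints
      intro i e hi
      rw [D.U2_key V W hi, decide_eq_true_iff, hF1 i e hi]
    · -- linking constraints
      intro i e hi
      by_cases hkey : e.1 ∈ D.β.freeVars
      · obtain ⟨p, Q, X, ψb⟩ := e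
        cases Q with
        | qall =>
            rw [D.sat_linkEntry_qall (D.U2 V W) rfl]
            intro hp x hx
            rw [hposfix i _ x hi hx, hnegfix i _ x hi hx, D.tgt_qall V W hkey]
            by_cases hS : Sat V (entryFml (p, Quant.qall, X, ψb))
            · rw [if_pos hS]
            · exfalso
              rw [D.U2_key V W hi, decide_eq_true_iff] at hp
              exact hS ((hF2 i _ hi hkey).1 hp)
        | qex =>
            rw [D.sat_linkEntry_qex (D.U2 V W) rfl]
            intro hp x hx
            rw [hposfix i _ x hi hx, hnegfix i _ x hi hx, D.tgt_qex V W hkey]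
            by_cases hS : Sat V (entryFml (p, Quant.qex, X, ψb))
            · exfalso
              rw [D.U2_key V W hi, decide_eq_false_iff_not] at hp
              exact hp ((hF2 i _ hi hkey).2 hS)
            · rw [if_neg hS]
      · have hlink : ∀ x ∈ e.2.2.1, D.U2 V W (D.posC i x) = D.U2 V W (D.negC i x) := by
          intro x hx
          rw [hposfix i e x hi hx, hnegfix i e x hi hx, D.tgt_junk V W hkey]
        obtain ⟨p, Q, X, ψb⟩ := e
        cases Q with
        | qall =>
            rw [D.sat_linkEntry_qall (D.U2 V W) rfl]
            intro _ x hx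
            exact hlink x hx
        | qex =>
            rw [D.sat_linkEntry_qex (D.U2 V W) rfl]
            intro _ x hx
            exact hlink x hx
    · -- the boolean skeleton
      rw [Fml.sat_congr D.β _ (sVal (D.L.map (fun e => (e.1, entryFml e))) V) ?_]
      · exact hVs
      · intro q hq
        by_cases hk : ∃ (i : ℕ) (e : ℕ × Quant × Finset ℕ × Fml), D.L[i]? = some e ∧ e.1 = q
        · obtain ⟨i, e, hi, rfl⟩ := hk
          rw [D.U2_key V W hi, D.sVal_key V hi]
          rw [decide_eq_decide]
          exact (hF1 i e hi).symm.trans ((hF1 i e hi).trans (hF2 i e hi hq))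
        · have hnk : ∀ e ∈ D.L, e.1 ≠ q := by
            intro e he hc
            obtain ⟨i, hi⟩ := List.mem_iff_getElem?.1 he
            exact hk ⟨i, e, hi, hc⟩
          have hqv : q ∈ Fml.vars φ :=
            Fml.freeVars_subset_vars φ (D.freeVar_nonkey_mem hq hnk)
          rw [D.U2_nonkey V W hnk, hU1v q hqv, hWV q hqv, D.sVal_nonkey V hnk]


open Fml in
theorem OneLevelData.backward_dir {φ : Fml} (D : OneLevelData φ) (V : ℕ → Bool)
    (h : Sat V (Fml.qall D.Nset (Fml.qex D.Pset D.Tall))) : Sat V φ := by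
  have hWagree : ∀ q ∉ D.Nset, D.Wneg V q = V q := by
    intro q hq
    apply D.Wneg_nonneg
    intro i e x hi hx hc
    exact hq (D.mem_Nset.2 ⟨i, e, hi, x, hx, hc⟩)
  obtain ⟨U, hUP, hsat⟩ := h (D.Wneg V) hWagree
  rw [D.sat_Tall] at hsat
  obtain ⟨hdefs, hlinks, hβ⟩ := hsat
  have hUv : ∀ q ∈ Fml.vars φ, U q = V q := by
    intro q hq
    rw [hUP q (D.notin_Pset_of_mem_vars hq)]
    exact hWagree q (D.notin_Nset_of_mem_vars hq)
  have hUneg : ∀ i e x, D.L[i]? = some e → x ∈ e.2.2.1 →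
      U (D.negC i x) = D.ntgt V i e x := by
    intro i e x hi hx
    have hnp : D.negC i x ∉ D.Pset := by
      rw [D.mem_Pset]
      rintro (⟨j, e', hj, y, hy, hc⟩ | ⟨j, e', hj, hc⟩)
      · exact D.posC_ne_negC hj hi hy hx hc
      · have hm : e'.1 ∈ D.L.map (fun e => e.1) :=
          List.mem_map_of_mem (List.mem_of_getElem? hj)
        rw [hc] at hm
        exact (D.hcfresh i e (Option.mem_def.2 hi) x hx).2.2.2 hm
    rw [hUP _ hnp, D.Wneg_negC V hi hx]
  have hkeyeval : ∀ (i : ℕ) e, D.L[i]? = some e → e.1 ∈ D.β.freeVars →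
      U e.1 = decide (Sat V (entryFml e)) := by
    intro i e hi hkey
    have hfr := D.pos_fresh hi hkey
    have hdef := hdefs i e hi
    rw [D.sat_renameEntry i e hfr] at hdef
    have hout : ∀ y ∈ freeVars e.2.2.2, y ∉ e.2.2.1 →
        (fun q => if q ∈ e.2.2.1 then U (D.posC i q) else U q) y = V y := by
      intro y hy hyX
      simp only [hyX, ite_false, if_neg]
      exact hUv y (D.body_free_sub hi hkey y hy)
    obtain ⟨p, Q, X, ψb⟩ := e
    cases Q with
    | qall =>
        by_cases hS : Sat V (entryFml (p, Quant.qall, X, ψb))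
        · rw [decide_eq_true hS]
          have hS' : Sat V (Fml.qall X ψb) := hS
          exact hdef.2 (Fml.sat_qall_inst X ψb V _ hS' hout)
        · rw [decide_eq_false hS]
          cases hU : U p with
          | false => rfl
          | true =>
              exfalso
              have hl := (D.sat_linkEntry_qall (i := i)
                (e := (p, Quant.qall, X, ψb)) U rfl).1 (hlinks i _ hi) hU
              have hsatU := hdef.1 hU
              have hS' : ¬ Sat V (Fml.qall X ψb) := hS
              rw [Fml.sat_congr _ _ (Fml.badW V X ψb) ?_] at hsatU
              · exact Fml.badW_spec V X ψb hS' hsatU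
              · intro y hy
                by_cases hyX : y ∈ X
                · simp only [hyX, ite_true, if_pos]
                  rw [hl y hyX, hUneg i _ y hi hyX, D.ntgt_qall V, if_neg hS]
                · simp only [hyX, ite_false, if_neg]
                  rw [hUv y (D.body_free_sub hi hkey y hy),
                    Fml.badW_agree V X ψb y hyX]
    | qex =>
        by_cases hS : Sat V (entryFml (p, Quant.qex, X, ψb))
        · rw [decide_eq_true hS]
          cases hU : U p with
          | true => rfl
          | false =>
              exfalso
              have hl := (D.sat_linkEntry_qex (i := i)
                (e := (p, Quant.qex, X, ψb)) U rfl).1 (hlinks i _ hi) hU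
              have hS' : Sat V (Fml.qex X ψb) := hS
              have hsatU : Sat (fun q => if q ∈ X then U (D.posC i q) else U q) ψb := by
                rw [Fml.sat_congr _ _ (Fml.goodW V X ψb) ?_]
                · exact Fml.goodW_spec V X ψb hS'
                · intro y hy
                  by_cases hyX : y ∈ X
                  · simp only [hyX, ite_true, if_pos]
                    rw [hl y hyX, hUneg i _ y hi hyX, D.ntgt_qex V, if_pos hS]
                  · simp only [hyX, ite_false, if_neg]
                    rw [hUv y (D.body_free_sub hi hkey y hy),
                      Fml.goodW_agree V X ψb y hyX]
              rw [hdef.2 hsatU] at hU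
              exact absurd hU (by simp)
        · rw [decide_eq_false hS]
          cases hU : U p with
          | false => rfl
          | true =>
              exfalso
              have hsatU := hdef.1 hU
              exact hS (Fml.sat_qex_intro X ψb V _ hsatU hout)
  rw [D.hdec, Fml.sat_simSubst_bool V D.β _ D.hbool]
  rw [Fml.sat_congr D.β _ U ?_]
  · exact hβ
  · intro q hq
    by_cases hk : ∃ (i : ℕ) (e : ℕ × Quant × Finset ℕ × Fml), D.L[i]? = some e ∧ e.1 = q
    · obtain ⟨i, e, hi, rfl⟩ := hk
      rw [D.sVal_key V hi, hkeyeval i e hi hq]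
    · have hnk : ∀ e ∈ D.L, e.1 ≠ q := by
        intro e he hc
        obtain ⟨i, hi⟩ := List.mem_iff_getElem?.1 he
        exact hk ⟨i, e, hi, hc⟩
      have hqv : q ∈ Fml.vars φ :=
        Fml.freeVars_subset_vars φ (D.freeVar_nonkey_mem hq hnk)
      rw [D.sVal_nonkey V hnk]
      exact (hUv q hqv).symm

open Fml OneLevelData in
/-- for every QBF `φ` (with any one-level decomposition and
choice of fresh copies), `∀N(φ) ∃P(φ) T^∀(φ)` is logically equivalent
to `φ`. -/
theorem Tall_correct (φ : Fml) (D : OneLevelData φ) :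
    Equiv (qall D.Nset (qex D.Pset D.Tall)) φ := by
  intro V
  exact ⟨D.backward_dir V, D.forward_dir V⟩
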